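/- Embedding of classical logic into BD via △: for every formula φ over {¬, ∧, ∨}, φ is classically valid if and only if φ△ is BD-valid, where φ△ replaces every variable occurrence p by △p. -/
import Mathlib


inductive FV | T | B | N | F
deriving DecidableEq

open FV

def fneg : FV → FV
  | T => F | F => T | B => B | N => N

def fand : FV → FV → FV
  | T, x => x
  | x, T => x
  | F, _ => F
  | _, F => F
  | B, B => B
  | N, N => N
  | B, N => F
  | N, B => F

def forr : FV → FV → FV
  | F, x => x
  | x, F => x
  | T, _ => T
  | _, T => T
  | B, B => B
  | N, N => N
  | B, N => T
  | N, B => T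

def fcirc : FV → FV
  | T => T | F => T | B => F | N => F

def ftri : FV → FV
  | T => T | B => T | N => F | F => F

inductive Fm
  | var : ℕ → Fm
  | neg : Fm → Fm
  | conj : Fm → Fm → Fm
  | disj : Fm → Fm → Fm
  | circ : Fm → Fm
  | tri : Fm → Fm

def eval (v : ℕ → FV) : Fm → FV
  | .var p => v p
  | .neg φ => fneg (eval v φ)
  | .conj φ χ => fand (eval v φ) (eval v χ)
  | .disj φ χ => forr (eval v φ) (eval v χ)
  | .circ φ => fcirc (eval v φ)
  | .tri φ => ftri (eval v φ)

/-- designated values -/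
def desig (x : FV) : Prop := x = T ∨ x = B

/-- formulas over {¬,∧,∨} -/
def isBD : Fm → Prop
  | .var _ => True
  | .neg φ => isBD φ
  | .conj φ χ => isBD φ ∧ isBD χ
  | .disj φ χ => isBD φ ∧ isBD χ
  | .circ _ => False
  | .tri _ => False

/-- formulas over {¬,∧,∨,∘} -/
def isCircFm : Fm → Prop
  | .var _ => True
  | .neg φ => isCircFm φ
  | .conj φ χ => isCircFm φ ∧ isCircFm χ
  | .disj φ χ => isCircFm φ ∧ isCircFm χ
  | .circ φ => isCircFm φ
  | .tri _ => False

/-- formulas over {¬,∧,∨,△} -/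
def isTriFm : Fm → Prop
  | .var _ => True
  | .neg φ => isTriFm φ
  | .conj φ χ => isTriFm φ ∧ isTriFm χ
  | .disj φ χ => isTriFm φ ∧ isTriFm χ
  | .circ _ => False
  | .tri φ => isTriFm φ

/-- BD entailment between single formulas -/
def ent (φ χ : Fm) : Prop := ∀ v, desig (eval v φ) → desig (eval v χ)

/-- classical (two-valued) evaluation of {¬,∧,∨}-formulas -/
def evalC (b : ℕ → Bool) : Fm → Bool
  | .var p => b p
  | .neg φ => !(evalC b φ)
  | .conj φ χ => evalC b φ && evalC b χ
  | .disj φ χ => evalC b φ || evalC b χ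
  | .circ φ => evalC b φ
  | .tri φ => evalC b φ


/-- replace every variable p by △p -/
def subTri : Fm → Fm
  | .var p => .tri (.var p)
  | .neg φ => .neg (subTri φ)
  | .conj φ χ => .conj (subTri φ) (subTri χ)
  | .disj φ χ => .disj (subTri φ) (subTri χ)
  | .circ φ => .circ (subTri φ)
  | .tri φ => .tri (subTri φ)

def b2fv : Bool → FV
  | true => T
  | false => F

lemma eval_subTri_eq (φ : Fm) (hφ : isBD φ) (v : ℕ → FV) :
    eval v (subTri φ) = b2fv (evalC (fun p => decide (ftri (v p) = T)) φ) := by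
  induction φ with
  | var p => simp only [subTri, eval, evalC]; cases h : v p <;> simp [ftri, b2fv] at h ⊢
  | neg φ ih =>
    simp only [subTri, eval, evalC, ih hφ]
    cases evalC (fun p => decide (ftri (v p) = T)) φ <;> rfl
  | conj φ χ ihφ ihχ =>
    simp only [subTri, eval, evalC, ihφ hφ.1, ihχ hφ.2]
    cases evalC (fun p => decide (ftri (v p) = T)) φ <;>
      cases evalC (fun p => decide (ftri (v p) = T)) χ <;> rfl
  | disj φ χ ihφ ihχ =>
    simp only [subTri, eval, evalC, ihφ hφ.1, ihχ hφ.2]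
    cases evalC (fun p => decide (ftri (v p) = T)) φ <;>
      cases evalC (fun p => decide (ftri (v p) = T)) χ <;> rfl
  | circ φ ih => exact absurd hφ (by simp [isBD])
  | tri φ ih => exact absurd hφ (by simp [isBD])

lemma evalC_congr (φ : Fm) (b b' : ℕ → Bool) (h : ∀ p, b p = b' p) :
    evalC b φ = evalC b' φ := by
  induction φ <;> simp only [evalC, *]

theorem cpl_to_bd_tri (φ : Fm) (hφ : isBD φ) :
    (∀ b : ℕ → Bool, evalC b φ = true) ↔
    (∀ v : ℕ → FV, desig (eval v (subTri φ))) := by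
  constructor
  · intro h v
    rw [eval_subTri_eq φ hφ v, h]
    exact Or.inl rfl
  · intro h b
    have := h (fun p => if b p then T else F)
    rw [eval_subTri_eq φ hφ] at this
    have hb : (fun p => decide (ftri (if b p then T else F) = T)) = b := by
      funext p; cases hbp : b p <;> simp [hbp, ftri]
    rw [hb] at this
    cases hx : evalC b φ
    · rw [hx] at this; rcases this with h' | h' <;> simp [b2fv] at h'
    · rfl
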